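/- Let n ≥ 0, r ≥ 2 and 1 ≤ t ≤ r−1 be integers. Then the total number of parts congruent to t mod r in all r-regular partitions of n equals the total number of parts congruent to t mod r in all r-flat partitions of n: Σ_{λ∈O_r(n)} ℓ_t(λ) = Σ_{λ∈F_r(n)} ℓ_t(λ). -/

import Mathlib

open scoped Classical

namespace BeckPaper

/-- The parts of a partition, sorted in non-increasing order. -/
def partsList {n : ℕ} (p : n.Partition) : List ℕ := p.parts.sort (· ≥ ·)

/-- The `i`-th part of a partition (`1`-indexed); `0` if `i` exceeds the number of parts. -/
def part {n : ℕ} (p : n.Partition) (i : ℕ) : ℕ := (partsList p).getD (i - 1) 0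

/-- `ℓ(λ)`: the number of parts of `λ`. -/
def numParts {n : ℕ} (p : n.Partition) : ℕ := Multiset.card p.parts

/-- `ℓ_t(λ)`: the number of parts of `λ` congruent to `t` modulo `r`. -/
def lMod (r t : ℕ) {n : ℕ} (p : n.Partition) : ℕ :=
  Multiset.card (p.parts.filter (fun x => x % r = t % r))

/-- `ℓ̄_t(λ)`: the number of different part sizes appearing at least `t` times in `λ`. -/
def lRep (t : ℕ) {n : ℕ} (p : n.Partition) : ℕ :=
  (p.parts.toFinset.filter (fun s => t ≤ p.parts.count s)).card

/-- `ℓ̄(λ)`: the number of different part sizes of `λ`. -/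
def lDist {n : ℕ} (p : n.Partition) : ℕ := p.parts.toFinset.card

/-- `d_t(λ)`: the number of indices `1 ≤ i ≤ ℓ(λ)` with `λ_i − λ_{i+1} ≥ t`. -/
def dCount (t : ℕ) {n : ℕ} (p : n.Partition) : ℕ :=
  ((Finset.Icc 1 (numParts p)).filter (fun i => t ≤ part p i - part p (i + 1))).card

/-- `λ ∈ O_r(n)`: no part is divisible by `r`. -/
def IsRegular (r : ℕ) {n : ℕ} (p : n.Partition) : Prop := ∀ x ∈ p.parts, ¬ r ∣ x

/-- `λ ∈ D_r(n)`: no part appears more than `r − 1` times. -/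
def IsRestricted (r : ℕ) {n : ℕ} (p : n.Partition) : Prop :=
  ∀ s : ℕ, p.parts.count s ≤ r - 1

/-- `λ ∈ F_r(n)`: all differences of consecutive parts (with `λ_{k+1} = 0`) are `≤ r − 1`. -/
def IsFlat (r : ℕ) {n : ℕ} (p : n.Partition) : Prop :=
  ∀ i, 1 ≤ i → i ≤ numParts p → part p i - part p (i + 1) ≤ r - 1

/-- `λ ∈ O_{1,r}(n)`: the set of part sizes divisible by `r` has exactly one element. -/
def IsOneRegular (r : ℕ) {n : ℕ} (p : n.Partition) : Prop :=
  (p.parts.toFinset.filter (fun s => r ∣ s)).card = 1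

/-- `λ ∈ D_{1,r}(n)`: exactly one part size appears at least `r` times. -/
def IsOneRestricted (r : ℕ) {n : ℕ} (p : n.Partition) : Prop :=
  (p.parts.toFinset.filter (fun s => r ≤ p.parts.count s)).card = 1

/-- `λ ∈ F_{1,r}(n)`: exactly one difference of consecutive parts is `≥ r`, and all
other such differences are `≤ r − 1`. -/
def IsOneFlat (r : ℕ) {n : ℕ} (p : n.Partition) : Prop :=
  ∃ i, (1 ≤ i ∧ i ≤ numParts p ∧ r ≤ part p i - part p (i + 1)) ∧
    ∀ j, 1 ≤ j → j ≤ numParts p → j ≠ i → part p j - part p (j + 1) ≤ r - 1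

/-- `λ ∈ T_r(n)`: exactly one part size has multiplicity at least `r`, and that
multiplicity is strictly less than `2r`. -/
def IsInT (r : ℕ) {n : ℕ} (p : n.Partition) : Prop :=
  ∃ s : ℕ, (r ≤ p.parts.count s ∧ p.parts.count s < 2 * r) ∧
    ∀ s' : ℕ, r ≤ p.parts.count s' → s' = s

/-! Conjugation maps `F_r(n)` onto the partitions with all multiplicities `< r` and turns `ℓ_t`
into the number of columns whose length is `≡ t (mod r)`. Both this set and `O_r(n)` are then
sieved over finite sets `B` of sizes: the partitions having every part `r j` (`j ∈ B`),
respectively every size `j ∈ B` with multiplicity at least `r`, are all partitions of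
`n - r ∑ B` with those parts added. Adding parts `≡ 0 (mod r)` does not change `ℓ_t`, and adding
`r` copies of a size does not change column lengths modulo `r`. So the two inclusion–exclusion
sums agree term by term, each term being a sum over all partitions of `n - r ∑ B`, where
conjugation identifies the two statistics again. -/

/-- `numGe s i` is the length of the `i`-th column of the Young diagram with rows `s`. -/
def numGe (s : Multiset ℕ) (i : ℕ) : ℕ := s.countP (i ≤ ·)

lemma numGe_eq_count_add_numGe (s : Multiset ℕ) (i : ℕ) :
    numGe s i = s.count i + numGe s (i + 1) := by
  induction s using Multiset.induction_on with
  | empty => simp [numGe]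
  | cons a s ih =>
    simp only [numGe, Multiset.count_cons, Multiset.countP_cons] at *
    split_ifs <;> omega

lemma numGe_add (s s' : Multiset ℕ) (i : ℕ) : numGe (s + s') i = numGe s i + numGe s' i :=
  Multiset.countP_add _ _ _

lemma sum_numGe_Icc {s : Multiset ℕ} {m : ℕ} (hs : ∀ x ∈ s, x ≤ m) :
    ∑ i ∈ Finset.Icc 1 m, numGe s i = s.sum := by
  induction s using Multiset.induction_on with
  | empty => simp [numGe]
  | cons a s ih =>
    have ha : (Finset.Icc 1 m).filter (· ≤ a) = Finset.Icc 1 a := by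
      ext i
      simp only [Finset.mem_filter, Finset.mem_Icc]
      have := hs a (Multiset.mem_cons_self a s)
      omega
    simp only [numGe, Multiset.countP_cons, Finset.sum_add_distrib, Multiset.sum_cons] at *
    rw [ih fun x hx => hs x (Multiset.mem_cons_of_mem hx), ← Finset.card_filter, ha,
      Nat.card_Icc, add_tsub_cancel_right, add_comm]

lemma lt_length_filter_iff {L : List ℕ} (hL : L.Pairwise (· ≥ ·)) {a b : ℕ} (hb : 1 ≤ b) :
    a < (L.filter (b ≤ ·)).length ↔ b ≤ L.getD a 0 := by
  induction L generalizing a with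
  | nil => simp only [List.filter_nil, List.length_nil, List.getD_nil]; omega
  | cons x L ih =>
    obtain ⟨hxL, hL⟩ := List.pairwise_cons.mp hL
    by_cases hbx : b ≤ x
    · cases a <;> simp [hbx, ih hL]
    · have hnil : L.filter (b ≤ ·) = [] :=
        List.filter_eq_nil_iff.mpr fun y hy => by have := hxL y hy; simp only [decide_eq_true_eq]; omega
      cases a with
      | zero => simp [hbx, hnil]
      | succ a =>
        rw [List.filter_cons_of_neg (by simpa using hbx), hnil, List.getD_cons_succ, ← ih hL, hnil]
        simp

variable {n : ℕ}

lemma le_numGe_iff_le_part (p : n.Partition) {a b : ℕ} (ha : 1 ≤ a) (hb : 1 ≤ b) :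
    a ≤ numGe p.parts b ↔ b ≤ part p a := by
  have hsort : p.parts = (partsList p : Multiset ℕ) := (Multiset.sort_eq _ _).symm
  rw [numGe, hsort, Multiset.coe_countP, List.countP_eq_length_filter, part,
    ← lt_length_filter_iff (L := partsList p) (Multiset.pairwise_sort _ _) hb]
  omega

lemma part_le (p : n.Partition) (i : ℕ) : part p i ≤ n := by
  rw [part, List.getD_eq_getElem?_getD]
  rcases h : (partsList p)[i - 1]? with _ | x
  · simp
  · refine Nat.Partition.le_of_mem_parts (p := p) ?_
    rw [← Multiset.mem_sort (· ≥ ·)]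
    exact List.mem_of_getElem? h

lemma part_eq_zero (p : n.Partition) {i : ℕ} (hi : numParts p < i) : part p i = 0 := by
  have hlen : (partsList p).length = numParts p := Multiset.length_sort _
  rw [part, List.getD_eq_default _ _ (by omega)]

lemma sum_numGe_parts (p : n.Partition) : ∑ i ∈ Finset.Icc 1 n, numGe p.parts i = n :=
  (sum_numGe_Icc fun _ => Nat.Partition.le_of_mem_parts).trans p.parts_sum

def conj (p : n.Partition) : n.Partition :=
  Nat.Partition.ofSums n ((Finset.Icc 1 n).val.map (numGe p.parts))
    ((Finset.sum_eq_multiset_sum _ _).symm.trans (sum_numGe_parts p))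

lemma countP_conj (p : n.Partition) (P : ℕ → Prop) [DecidablePred P] (h0 : ¬ P 0) :
    (conj p).parts.countP P = ((Finset.Icc 1 n).filter (fun i => P (numGe p.parts i))).card := by
  rw [conj, Nat.Partition.ofSums_parts, Multiset.countP_filter, Multiset.countP_map]
  congr 1
  exact Multiset.filter_congr fun x _ => and_iff_left_of_imp fun hx h => h0 (h ▸ hx)

lemma numGe_conj (p : n.Partition) {i : ℕ} (hi : 1 ≤ i) : numGe (conj p).parts i = part p i := by
  rw [numGe, countP_conj p _ (by omega)]
  have : (Finset.Icc 1 n).filter (fun k => i ≤ numGe p.parts k) = Finset.Icc 1 (part p i) := by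
    ext k
    simp only [Finset.mem_filter, Finset.mem_Icc]
    have := part_le p i
    constructor
    · rintro ⟨hk, hki⟩
      exact ⟨hk.1, (le_numGe_iff_le_part p hi hk.1).mp hki⟩
    · rintro ⟨hk, hki⟩
      exact ⟨⟨hk, by omega⟩, (le_numGe_iff_le_part p hi hk).mpr hki⟩
  rw [this, Nat.card_Icc, add_tsub_cancel_right]

lemma part_conj (p : n.Partition) {i : ℕ} (hi : 1 ≤ i) : part (conj p) i = numGe p.parts i := by
  have key : ∀ a, a ≤ part (conj p) i ↔ a ≤ numGe p.parts i := by
    intro a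
    rcases Nat.eq_zero_or_pos a with rfl | ha
    · simp
    rw [← le_numGe_iff_le_part _ hi ha, numGe_conj p ha, le_numGe_iff_le_part p ha hi]
  exact le_antisymm ((key _).1 le_rfl) ((key _).2 le_rfl)

lemma count_conj (p : n.Partition) {i : ℕ} (hi : 1 ≤ i) :
    (conj p).parts.count i = part p i - part p (i + 1) := by
  rw [← numGe_conj p hi, ← numGe_conj p (by omega), numGe_eq_count_add_numGe _ i]
  omega

lemma count_zero_parts (p : n.Partition) : p.parts.count 0 = 0 :=
  Multiset.count_eq_zero.mpr fun h => (p.parts_pos h).false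

lemma conj_involutive : Function.Involutive (conj (n := n)) := by
  intro p
  ext i
  rcases Nat.eq_zero_or_pos i with rfl | hi
  · rw [count_zero_parts, count_zero_parts]
  · rw [count_conj _ hi, part_conj p hi, part_conj p (by omega), numGe_eq_count_add_numGe _ i]
    omega

lemma isFlat_iff_isRestricted_conj (r : ℕ) (p : n.Partition) :
    IsFlat r p ↔ IsRestricted r (conj p) := by
  constructor
  · intro hflat i
    rcases Nat.eq_zero_or_pos i with rfl | hi
    · rw [count_zero_parts]
      exact Nat.zero_le _
    rw [count_conj p hi]
    rcases le_or_gt i (numParts p) with hip | hip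
    · exact hflat i hi hip
    · rw [part_eq_zero p hip, Nat.zero_sub]
      exact Nat.zero_le _
  · intro hres i hi _
    rw [← count_conj p hi]
    exact hres i

def colMod (r t N : ℕ) (s : Multiset ℕ) : ℕ :=
  ((Finset.Icc 1 N).filter (fun i => numGe s i % r = t % r)).card

section

variable {r t : ℕ} (ht : t % r ≠ 0)
include ht

lemma lMod_conj (p : n.Partition) : lMod r t (conj p) = colMod r t n p.parts := by
  rw [lMod, ← Multiset.countP_eq_card_filter, countP_conj p _ (by simpa using Ne.symm ht), colMod]

lemma colMod_eq_of_le {N : ℕ} (hnN : n ≤ N) (p : n.Partition) :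
    colMod r t N p.parts = colMod r t n p.parts := by
  unfold colMod
  congr 1
  ext i
  simp only [Finset.mem_filter, Finset.mem_Icc]
  refine ⟨fun ⟨⟨hi, hiN⟩, hmod⟩ => ⟨⟨hi, ?_⟩, hmod⟩, fun ⟨⟨hi, hin⟩, hmod⟩ => ⟨⟨hi, by omega⟩, hmod⟩⟩
  by_contra hin
  have : numGe p.parts i = 0 := Multiset.countP_eq_zero.mpr fun x hx hix =>
    hin (hix.trans (Nat.Partition.le_of_mem_parts hx))
  exact ht (by rw [← hmod, this, Nat.zero_mod])

lemma sum_colMod_eq_sum_lMod {N : ℕ} (hnN : n ≤ N) :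
    ∑ p : n.Partition, colMod r t N p.parts = ∑ p : n.Partition, lMod r t p :=
  Fintype.sum_equiv conj_involutive.toPerm _ _ fun p => by
    rw [colMod_eq_of_le ht hnN, Function.Involutive.coe_toPerm, lMod_conj ht]

end

lemma sum_filter_le_parts {β : Type*} [AddCommMonoid β] {M : Multiset ℕ} (hM : ∀ x ∈ M, 0 < x)
    (f : Multiset ℕ → β) (hf : ∀ s, f (s + M) = f s) :
    ∑ p : n.Partition with M ≤ p.parts, f p.parts =
      if M.sum ≤ n then ∑ q : (n - M.sum).Partition, f q.parts else 0 := by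
  have hsum : ∀ p : n.Partition, M ≤ p.parts → (p.parts - M).sum + M.sum = n := fun p hp => by
    rw [← Multiset.sum_add, tsub_add_cancel_of_le hp, p.parts_sum]
  split_ifs with hMn
  · refine Finset.sum_bij'
      (fun p hp => ⟨p.parts - M,
        fun hx => p.parts_pos (Multiset.mem_of_le (Multiset.sub_le_self _ _) hx),
        by have := hsum p (Finset.mem_filter.mp hp).2; omega⟩)
      (fun q _ => ⟨q.parts + M,
        fun hx => (Multiset.mem_add.mp hx).elim q.parts_pos (hM _),
        by rw [Multiset.sum_add, q.parts_sum]; omega⟩)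
      (fun _ _ => Finset.mem_univ _)
      (fun q _ => Finset.mem_filter.mpr ⟨Finset.mem_univ _, Multiset.le_add_left _ _⟩)
      (fun p hp => Nat.Partition.ext (tsub_add_cancel_of_le (Finset.mem_filter.mp hp).2))
      (fun q _ => Nat.Partition.ext (add_tsub_cancel_right _ _))
      (fun p hp => ?_)
    exact (congrArg f (tsub_add_cancel_of_le (Finset.mem_filter.mp hp).2)).symm.trans (hf _)
  · refine Finset.sum_eq_zero fun p hp => absurd ?_ hMn
    have := hsum p (Finset.mem_filter.mp hp).2
    omega

lemma filter_isRegular_eq_inf (r : ℕ) :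
    Finset.univ.filter (fun p : n.Partition => IsRegular r p) =
      (Finset.Icc 1 n).inf fun j => (Finset.univ.filter fun p : n.Partition => r * j ∈ p.parts)ᶜ := by
  ext p
  simp only [Finset.mem_filter, Finset.mem_univ, true_and, Finset.mem_inf, Finset.mem_compl,
    Finset.mem_Icc]
  refine ⟨fun hp j _ hj => hp _ hj (dvd_mul_right r j), ?_⟩
  rintro hp x hx ⟨j, rfl⟩
  have hpos := p.parts_pos hx
  have hle := Nat.Partition.le_of_mem_parts hx
  exact hp j ⟨Nat.pos_of_mul_pos_left hpos, le_trans (Nat.le_mul_of_pos_left j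
    (Nat.pos_of_mul_pos_right hpos)) hle⟩ hx

lemma filter_isRestricted_eq_inf {r : ℕ} (hr : 0 < r) :
    Finset.univ.filter (fun p : n.Partition => IsRestricted r p) =
      (Finset.Icc 1 n).inf fun j =>
        (Finset.univ.filter fun p : n.Partition => r ≤ p.parts.count j)ᶜ := by
  ext p
  simp only [Finset.mem_filter, Finset.mem_univ, true_and, Finset.mem_inf, Finset.mem_compl,
    Finset.mem_Icc, not_le]
  refine ⟨fun hp j _ => by have := hp j; omega, fun hp j => ?_⟩
  by_cases hj : j ∈ p.parts
  · have := hp j ⟨p.parts_pos hj, Nat.Partition.le_of_mem_parts hj⟩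
    omega
  · rw [Multiset.count_eq_zero.mpr hj]
    exact Nat.zero_le _

variable {r t : ℕ} {B : Finset ℕ}

lemma sum_lMod_inf_mem_mul (hr : 0 < r) (ht : t % r ≠ 0) (hB : ∀ j ∈ B, 0 < j) :
    ∑ p ∈ B.inf (fun j => Finset.univ.filter fun p : n.Partition => r * j ∈ p.parts), lMod r t p =
      if r * ∑ j ∈ B, j ≤ n then ∑ q : (n - r * ∑ j ∈ B, j).Partition, lMod r t q else 0 := by
  have hM : (B.val.map (r * ·)).sum = r * ∑ j ∈ B, j := Multiset.sum_map_mul_left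
  have hinf : B.inf (fun j => Finset.univ.filter fun p : n.Partition => r * j ∈ p.parts) =
      Finset.univ.filter fun p : n.Partition => B.val.map (r * ·) ≤ p.parts := by
    ext p
    simp only [Finset.mem_inf, Finset.mem_filter, Finset.mem_univ, true_and,
      Multiset.le_iff_subset (B.nodup.map (mul_right_injective₀ hr.ne')), Multiset.subset_iff,
      Multiset.mem_map, Finset.mem_val, forall_exists_index, and_imp, forall_apply_eq_imp_iff₂]
  rw [hinf, ← hM]
  refine sum_filter_le_parts (f := fun s => Multiset.card (s.filter (· % r = t % r))) ?_ ?_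
  · simp only [Multiset.mem_map, Finset.mem_val, forall_exists_index, and_imp,
      forall_apply_eq_imp_iff₂]
    exact fun j hj => Nat.mul_pos hr (hB j hj)
  · intro s
    rw [Multiset.filter_add, Multiset.card_add, add_eq_left, Multiset.card_eq_zero,
      Multiset.filter_eq_nil]
    simp only [Multiset.mem_map, Finset.mem_val, forall_exists_index, and_imp,
      forall_apply_eq_imp_iff₂, Nat.mul_mod_right]
    exact fun _ _ h => ht h.symm

lemma sum_colMod_inf_le_count (hB : ∀ j ∈ B, 0 < j) :
    ∑ p ∈ B.inf (fun j => Finset.univ.filter fun p : n.Partition => r ≤ p.parts.count j),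
        colMod r t n p.parts =
      if r * ∑ j ∈ B, j ≤ n then
        ∑ q : (n - r * ∑ j ∈ B, j).Partition, colMod r t n q.parts else 0 := by
  have hM : (r • B.val).sum = r * ∑ j ∈ B, j := by
    rw [Multiset.sum_nsmul, smul_eq_mul, Finset.sum_eq_multiset_sum, Multiset.map_id']
  have hinf : B.inf (fun j => Finset.univ.filter fun p : n.Partition => r ≤ p.parts.count j) =
      Finset.univ.filter fun p : n.Partition => r • B.val ≤ p.parts := by
    ext p
    simp only [Finset.mem_inf, Finset.mem_filter, Finset.mem_univ, true_and, Multiset.le_iff_count,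
      Multiset.count_nsmul, Multiset.count_eq_of_nodup B.nodup, Finset.mem_val]
    refine ⟨fun hp j => ?_, fun hp j hj => by simpa [hj] using hp j⟩
    split_ifs with hj
    · simpa using hp j hj
    · simp
  rw [hinf, ← hM]
  refine sum_filter_le_parts (fun x hx => hB x (Multiset.mem_of_mem_nsmul hx)) _ fun s => ?_
  have hmod : ∀ i, numGe (s + r • B.val) i % r = numGe s i % r := fun i => by
    rw [numGe_add, numGe, numGe, Multiset.countP_nsmul, Nat.add_mul_mod_self_left]
  simp only [colMod, hmod]

lemma sum_lMod_isFlat_eq_sum_colMod_isRestricted (ht : t % r ≠ 0) :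
    ∑ p : n.Partition with IsFlat r p, lMod r t p =
      ∑ p : n.Partition with IsRestricted r p, colMod r t n p.parts := by
  refine Finset.sum_equiv conj_involutive.toPerm (fun p => ?_) fun p _ => ?_
  · simp [isFlat_iff_isRestricted_conj]
  · rw [Function.Involutive.coe_toPerm, ← lMod_conj ht, conj_involutive]

theorem parts_mod_regular_eq_flat_general (n r t : ℕ) (ht1 : 1 ≤ t) (ht2 : t ≤ r - 1) :
    (∑ p ∈ Finset.univ.filter (fun p : n.Partition => IsRegular r p), lMod r t p) =
      ∑ p ∈ Finset.univ.filter (fun p : n.Partition => IsFlat r p), lMod r t p := by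
  have hr : 0 < r := by omega
  have ht : t % r ≠ 0 := by rw [Nat.mod_eq_of_lt (by omega)]; omega
  zify
  rw [filter_isRegular_eq_inf, Finset.inclusion_exclusion_sum_inf_compl,
    ← Nat.cast_sum, sum_lMod_isFlat_eq_sum_colMod_isRestricted ht, filter_isRestricted_eq_inf hr, Nat.cast_sum, Finset.inclusion_exclusion_sum_inf_compl]
  refine Finset.sum_congr rfl fun B hB => ?_
  have hBpos : ∀ j ∈ B, 0 < j := fun j hj => (Finset.mem_Icc.mp (Finset.mem_powerset.mp hB hj)).1
  rw [← Nat.cast_sum, ← Nat.cast_sum, sum_lMod_inf_mem_mul hr ht hBpos,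
    sum_colMod_inf_le_count hBpos, sum_colMod_eq_sum_lMod ht tsub_le_self]

theorem parts_mod_regular_eq_flat (n r t : ℕ) (hr : 2 ≤ r) (ht1 : 1 ≤ t) (ht2 : t ≤ r - 1) :
    (∑ p ∈ Finset.univ.filter (fun p : n.Partition => IsRegular r p), lMod r t p) =
      ∑ p ∈ Finset.univ.filter (fun p : n.Partition => IsFlat r p), lMod r t p :=
  parts_mod_regular_eq_flat_general n r t ht1 ht2

end BeckPaper
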